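/- arXiv:2304.14642 — 3 statements merged into one kernel-verified Lean document; each statement's English description precedes it below -/
import Mathlib

section
/- For every γ ∈ (0,1) and every step size s > 0, there exists t₀ > 3γ√s (depending only on γ and s) such that along any solution X of the high-resolution differential equation, for all t ≥ t₀, (√s/2) ∫_{t₀}^{t} u^{2γ} ‖∇f(X(u) + √s Ẋ(u))‖² du ≤ E(t₀), where E is the continuous Lyapunov function. -/
/-!
Write `y = X + √s Ẋ` and `A(t)` for the coefficient of `f(y) - f(x⋆)` in `E`. Differentiating `E`
along a trajectory, the `‖Ẋ‖²` and `⟨X - x⋆, Ẋ⟩` terms cancel (the weights `t^γ`, `2γ t^(γ-1)` are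
matched to the friction `3γ/t`), and the gradient cross terms combine into
`-β(t) ⟨∇f(y), y - x⋆⟩` with `β(t) = 2γ t^(2γ-1) (1 + 3γ√s/(2t))`. By convexity
`f(y) - f(x⋆) ≤ ⟨∇f(y), y - x⋆⟩`, so this absorbs `A'(t) (f(y) - f(x⋆))` as soon as `A' ≤ β`, and
the `‖∇f(y)‖²` terms leave at most `-(√s/2) t^(2γ) ‖∇f(y)‖²`; both facts are polynomial
inequalities in `t` and `γ√s` valid for `t > 3γ√s`, and the `‖X - x⋆‖²` term is nonpositive as
`γ ≤ 1`. Integrating `Ė(u) ≤ -(√s/2) u^(2γ) ‖∇f(y)‖²` from `t₀` to `t` and using `E(t) ≥ 0`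
gives the bound for any `t₀ > 3γ√s`.
-/

open Set Filter Topology

/-- The continuous Lyapunov function for the underdamped high-resolution ODE. -/
noncomputable def lyapCont (γ s : ℝ) {d : ℕ} (f : EuclideanSpace ℝ (Fin d) → ℝ)
    (xstar : EuclideanSpace ℝ (Fin d)) (X V : ℝ → EuclideanSpace ℝ (Fin d)) (t : ℝ) : ℝ :=
  (t ^ γ * (t ^ γ - 2 * γ * Real.sqrt s * t ^ (γ - 1)) / (t - 3 * γ * Real.sqrt s)) *
      (t + 3 * γ * Real.sqrt s / 2) * (f (X t + Real.sqrt s • V t) - f xstar) +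
    (1 / 2) * ‖(t ^ γ) • V t + (2 * γ * t ^ (γ - 1)) • (X t - xstar)‖ ^ 2 +
    γ * (1 - γ) * t ^ (2 * (γ - 1)) * ‖X t - xstar‖ ^ 2

open MeasureTheory
open scoped RealInnerProductSpace

section Calculus

variable {E : Type*} [NormedAddCommGroup E] [InnerProductSpace ℝ E] [CompleteSpace E]

theorem HasGradientAt.comp_hasDerivAt {f : E → ℝ} {g : E} {p : ℝ → E} {v : E} {t : ℝ}
    (hf : HasGradientAt f g (p t)) (hp : HasDerivAt p v t) :
    HasDerivAt (fun τ => f (p τ)) ⟪g, v⟫ t :=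
  (hasGradientAt_iff_hasFDerivAt.1 hf).comp_hasDerivAt t hp

theorem ConvexOn.add_inner_sub_le_of_hasGradientAt {f : E → ℝ}
    (hf : ConvexOn ℝ univ f) {a g : E} (hg : HasGradientAt f g a) (z : E) :
    f a + ⟪g, z - a⟫ ≤ f z := by
  have hline : ConvexOn ℝ univ (fun θ : ℝ => f (AffineMap.lineMap a z θ)) :=
    hf.comp_affineMap (AffineMap.lineMap a z)
  have hderiv : HasDerivAt (fun θ : ℝ => f (AffineMap.lineMap a z θ)) ⟪g, z - a⟫ 0 := by
    refine HasGradientAt.comp_hasDerivAt (by simpa using hg) ?_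
    simpa using AffineMap.hasDerivAt_lineMap (a := a) (b := z) (x := 0)
  have := hline.le_slope_of_hasDerivAt (mem_univ 0) (mem_univ 1) one_pos hderiv
  simp [slope_def_field] at this
  linarith

end Calculus

theorem integral_le_sub_of_forall_hasDerivAt_le {g φ : ℝ → ℝ} {a b : ℝ} (hab : a ≤ b)
    (hφ : IntegrableOn φ (Icc a b)) (hg : ∀ x ∈ Icc a b, ∃ g', HasDerivAt g g' x ∧ g' ≤ -φ x) :
    ∫ x in a..b, φ x ≤ g a - g b := by
  have hderiv : ∀ x ∈ Icc a b, HasDerivAt g (deriv g x) x := fun x hx =>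
    let ⟨_, hg', _⟩ := hg x hx; hg'.differentiableAt.hasDerivAt
  have := intervalIntegral.sub_le_integral_of_hasDeriv_right_of_le hab
    (fun x hx => (hderiv x hx).continuousAt.continuousWithinAt)
    (fun x hx => (hderiv x (Ioo_subset_Icc_self hx)).hasDerivWithinAt) hφ.neg
    (fun x hx => by
      obtain ⟨g', hg', hle⟩ := hg x (Ioo_subset_Icc_self hx)
      rwa [hg'.deriv])
  simp only [Pi.neg_apply, intervalIntegral.integral_neg] at this
  linarith

noncomputable def lyapWeight (γ c t : ℝ) : ℝ :=
  t ^ γ * (t ^ γ - 2 * γ * c * t ^ (γ - 1)) / (t - 3 * γ * c) * (t + 3 * γ * c / 2)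

section LyapunovWeight

variable {γ c t : ℝ}

theorem lyapWeight_eq (ht : t ≠ 0) :
    lyapWeight γ c t =
      (t ^ γ) ^ 2 * ((t - 2 * γ * c) * (t + 3 * γ * c / 2) / (t * (t - 3 * γ * c))) := by
  rw [lyapWeight, Real.rpow_sub_one ht]
  field_simp

theorem lyapWeight_nonneg (hγ : 0 ≤ γ) (hc : 0 ≤ c) (ht : 3 * γ * c < t) :
    0 ≤ lyapWeight γ c t := by
  have hκ : 0 ≤ γ * c := mul_nonneg hγ hc
  have : 0 < t - 3 * γ * c := by linarith
  have : 0 ≤ t - 2 * γ * c := by linarith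
  have : 0 < t := by linarith
  rw [lyapWeight_eq this.ne']
  positivity

theorem lyapWeight_mul_one_sub (ht : t ≠ 0) (ht' : t ≠ 3 * γ * c) :
    lyapWeight γ c t * (1 - 3 * γ * c / t) =
      (t ^ γ) ^ 2 * (1 - 2 * γ * c / t) * (1 + 3 * γ * c / (2 * t)) := by
  rw [lyapWeight_eq ht]
  set δ := t - 3 * γ * c with hδ
  have : δ ≠ 0 := sub_ne_zero.2 ht'
  field_simp
  rw [hδ]
  ring

theorem sq_rpow_div_two_le_lyapWeight_mul (hκ : 0 ≤ γ * c) (ht : 3 * γ * c < t) :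
    (t ^ γ) ^ 2 / 2 ≤ lyapWeight γ c t * (1 + 3 * γ * c / (2 * t)) := by
  have ht0 : 0 < t := by linarith
  have hd : 0 < t - 3 * γ * c := by linarith
  have hgap : lyapWeight γ c t * (1 + 3 * γ * c / (2 * t)) - (t ^ γ) ^ 2 / 2 =
      (t ^ γ) ^ 2 * ((t - 3 * γ * c) * (t ^ 2 + 8 * (γ * c) * t + 33 / 2 * (γ * c) ^ 2) +
        81 / 2 * (γ * c) ^ 3) / (2 * t ^ 2 * (t - 3 * γ * c)) := by
    rw [lyapWeight_eq ht0.ne']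
    set δ := t - 3 * γ * c with hδ
    have : δ ≠ 0 := hd.ne'
    field_simp
    rw [hδ]
    ring
  rw [← sub_nonneg, hgap]
  positivity

theorem hasDerivAt_lyapRatio (ht : 0 < t) (hd : 0 < t - 3 * γ * c) :
    HasDerivAt (fun τ => (τ - 2 * γ * c) * (τ + 3 * γ * c / 2) / (τ * (τ - 3 * γ * c)))
      (-(γ * c * (5 / 2 * t ^ 2 - 6 * (γ * c) * t + 9 * (γ * c) ^ 2)) /
        (t ^ 2 * (t - 3 * γ * c) ^ 2)) t := by
  refine ((((hasDerivAt_id' t).sub_const _).fun_mul ((hasDerivAt_id' t).add_const _)).fun_div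
    ((hasDerivAt_id' t).fun_mul ((hasDerivAt_id' t).sub_const _)) (by positivity)).congr_deriv ?_
  field_simp
  ring

theorem exists_hasDerivAt_lyapWeight_le (hγ : γ ∈ Icc (0 : ℝ) 1) (hc : 0 ≤ c)
    (ht : 3 * γ * c < t) :
    ∃ A', HasDerivAt (lyapWeight γ c) A' t ∧
      A' ≤ 2 * γ * (t ^ γ) ^ 2 / t * (1 + 3 * γ * c / (2 * t)) := by
  obtain ⟨hγ0, hγ1⟩ := hγ
  have hκ : 0 ≤ γ * c := mul_nonneg hγ0 hc
  have ht0 : 0 < t := by linarith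
  have hd : 0 < t - 3 * γ * c := by linarith
  have hq : HasDerivAt (fun τ : ℝ => (τ ^ γ) ^ 2) (2 * γ * (t ^ γ) ^ 2 / t) t := by
    refine ((Real.hasDerivAt_rpow_const (.inl ht0.ne')).pow 2).congr_deriv ?_
    rw [Real.rpow_sub_one ht0.ne']
    ring
  have hρ := hasDerivAt_lyapRatio ht0 hd
  have hev : lyapWeight γ c =ᶠ[𝓝 t]
      fun τ => (τ ^ γ) ^ 2 * ((τ - 2 * γ * c) * (τ + 3 * γ * c / 2) / (τ * (τ - 3 * γ * c))) :=
    (eventually_ne_nhds ht0.ne').mono fun τ hτ => lyapWeight_eq hτ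
  refine ⟨_, (hq.fun_mul hρ).congr_of_eventuallyEq hev, ?_⟩
  have hquad :
      (2 * γ - 5 / 2) * t ^ 2 + (6 - 3 * γ) * (γ * c) * t - (9 * γ + 9) * (γ * c) ^ 2 ≤ 0 := by
    nlinarith [sq_nonneg (t - 3 * (γ * c)), mul_nonneg hκ hd.le]
  have hgap : 2 * γ * (t ^ γ) ^ 2 / t * (1 + 3 * γ * c / (2 * t)) -
      (2 * γ * (t ^ γ) ^ 2 / t * ((t - 2 * γ * c) * (t + 3 * γ * c / 2) / (t * (t - 3 * γ * c))) +
        (t ^ γ) ^ 2 * (-(γ * c * (5 / 2 * t ^ 2 - 6 * (γ * c) * t + 9 * (γ * c) ^ 2)) /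
          (t ^ 2 * (t - 3 * γ * c) ^ 2))) =
      (t ^ γ) ^ 2 * (γ * c) * -((2 * γ - 5 / 2) * t ^ 2 + (6 - 3 * γ) * (γ * c) * t -
        (9 * γ + 9) * (γ * c) ^ 2) / (t ^ 2 * (t - 3 * γ * c) ^ 2) := by
    set δ := t - 3 * γ * c with hδ
    have : δ ≠ 0 := hd.ne'
    field_simp
    rw [hδ]
    ring
  rw [← sub_nonneg, hgap]
  have := neg_nonneg.2 hquad
  positivity

end LyapunovWeight

section HighResolutionODE

variable {E : Type*} [NormedAddCommGroup E] [InnerProductSpace ℝ E]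
  {γ c t : ℝ} {X V : ℝ → E} {G xstar : E}

theorem hasDerivAt_momentum (ht : 0 < t) (hX : HasDerivAt X (V t) t)
    (hV : HasDerivAt V (-((3 * γ / t) • V t + (1 + 3 * γ * c / (2 * t)) • G)) t) :
    HasDerivAt (fun τ => τ ^ γ • V τ + (2 * γ * τ ^ (γ - 1)) • (X τ - xstar))
      ((2 * γ * (γ - 1) * t ^ γ / t ^ 2) • (X t - xstar) -
        (t ^ γ * (1 + 3 * γ * c / (2 * t))) • G) t := by
  have hq := Real.hasDerivAt_rpow_const (x := t) (p := γ) (.inl ht.ne')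
  have hq' := Real.hasDerivAt_rpow_const (x := t) (p := γ - 1) (.inl ht.ne')
  refine ((hq.smul hV).add ((hq'.const_mul (2 * γ)).smul (hX.sub_const xstar))).congr_deriv ?_
  rw [Real.rpow_sub_one ht.ne', Real.rpow_sub_one ht.ne', Real.rpow_sub_one ht.ne']
  field_simp
  module

theorem hasDerivAt_kinetic (ht : 0 < t) (hX : HasDerivAt X (V t) t)
    (hV : HasDerivAt V (-((3 * γ / t) • V t + (1 + 3 * γ * c / (2 * t)) • G)) t) :
    HasDerivAt (fun τ => 1 / 2 * ‖τ ^ γ • V τ + (2 * γ * τ ^ (γ - 1)) • (X τ - xstar)‖ ^ 2 +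
        γ * (1 - γ) * τ ^ (2 * (γ - 1)) * ‖X τ - xstar‖ ^ 2)
      (-(2 * γ * (1 - γ) * (1 + γ) * (t ^ γ) ^ 2 / t ^ 3 * ‖X t - xstar‖ ^ 2) -
        (t ^ γ) ^ 2 * (1 + 3 * γ * c / (2 * t)) * (⟪G, V t⟫ + 2 * γ / t * ⟪G, X t - xstar⟫))
      t := by
  have hw := ((hasDerivAt_momentum (xstar := xstar) ht hX hV).norm_sq).const_mul (1 / 2 : ℝ)
  have hp := Real.hasDerivAt_rpow_const (x := t) (p := 2 * (γ - 1)) (.inl ht.ne')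
  have hx := (hX.sub_const xstar).norm_sq
  refine (hw.add ((hp.const_mul (γ * (1 - γ))).mul hx)).congr_deriv ?_
  have e1 : t ^ (γ - 1) = t ^ γ / t := Real.rpow_sub_one ht.ne' γ
  have e2 : t ^ (2 * (γ - 1)) = (t ^ γ / t) ^ 2 := by
    rw [two_mul, Real.rpow_add ht, e1, sq]
  have e3 : t ^ (2 * (γ - 1) - 1) = (t ^ γ / t) ^ 2 / t := by
    rw [Real.rpow_sub_one ht.ne', e2]
  rw [e1, e2, e3]
  generalize X t - xstar = x
  simp only [inner_add_left, inner_sub_right, inner_smul_left, inner_smul_right,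
    real_inner_self_eq_norm_sq, RCLike.conj_to_real, real_inner_comm x (V t),
    real_inner_comm G (V t), real_inner_comm G x]
  field_simp
  ring

theorem hasDerivAt_potential [CompleteSpace E] {f : E → ℝ}
    (hf : HasGradientAt f G (X t + c • V t)) (hX : HasDerivAt X (V t) t)
    (hV : HasDerivAt V (-((3 * γ / t) • V t + (1 + 3 * γ * c / (2 * t)) • G)) t) :
    HasDerivAt (fun τ => f (X τ + c • V τ))
      ((1 - 3 * γ * c / t) * ⟪G, V t⟫ - c * (1 + 3 * γ * c / (2 * t)) * ‖G‖ ^ 2) t := by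
  refine (hf.comp_hasDerivAt (hX.add (hV.const_smul c))).congr_deriv ?_
  simp only [inner_add_right, inner_neg_right, inner_smul_right, real_inner_self_eq_norm_sq]
  ring

end HighResolutionODE

theorem lyapCont_nonneg {d : ℕ} {γ s t : ℝ} {f : EuclideanSpace ℝ (Fin d) → ℝ}
    {xstar : EuclideanSpace ℝ (Fin d)} {X V : ℝ → EuclideanSpace ℝ (Fin d)}
    (hγ : γ ∈ Icc (0 : ℝ) 1) (ht : 3 * γ * Real.sqrt s < t)
    (hmin : f xstar ≤ f (X t + Real.sqrt s • V t)) : 0 ≤ lyapCont γ s f xstar X V t := by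
  have hb : 0 ≤ 3 * γ * Real.sqrt s := by have := Real.sqrt_nonneg s; have := hγ.1; positivity
  have hW := lyapWeight_nonneg hγ.1 (Real.sqrt_nonneg s) ht
  have hF : 0 ≤ f (X t + Real.sqrt s • V t) - f xstar := sub_nonneg.2 hmin
  have hB : 0 ≤ γ * (1 - γ) * t ^ (2 * (γ - 1)) :=
    mul_nonneg (mul_nonneg hγ.1 (sub_nonneg.2 hγ.2)) (Real.rpow_nonneg (hb.trans ht.le) _)
  rw [lyapWeight] at hW
  exact add_nonneg (add_nonneg (mul_nonneg hW hF) (by positivity)) (by positivity)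

theorem exists_hasDerivAt_lyapCont_le {d : ℕ} {γ s t : ℝ} {f : EuclideanSpace ℝ (Fin d) → ℝ}
    {G xstar : EuclideanSpace ℝ (Fin d)} {X V : ℝ → EuclideanSpace ℝ (Fin d)}
    (hγ : γ ∈ Icc (0 : ℝ) 1) (ht : 3 * γ * Real.sqrt s < t) (hf : ConvexOn ℝ univ f)
    (hmin : f xstar ≤ f (X t + Real.sqrt s • V t))
    (hG : HasGradientAt f G (X t + Real.sqrt s • V t)) (hX : HasDerivAt X (V t) t)
    (hV : HasDerivAt V
      (-((3 * γ / t) • V t + (1 + 3 * γ * Real.sqrt s / (2 * t)) • G)) t) :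
    ∃ D, HasDerivAt (lyapCont γ s f xstar X V) D t ∧
      D ≤ -(Real.sqrt s / 2 * (t ^ (2 * γ) * ‖G‖ ^ 2)) := by
  obtain ⟨hγ0, hγ1⟩ := hγ
  set c := Real.sqrt s
  have hc : 0 ≤ c := Real.sqrt_nonneg s
  have hκ : 0 ≤ γ * c := mul_nonneg hγ0 hc
  have ht0 : 0 < t := by linarith
  obtain ⟨A', hW, hA'⟩ := exists_hasDerivAt_lyapWeight_le ⟨hγ0, hγ1⟩ hc ht
  have hE : lyapCont γ s f xstar X V = fun τ =>
      lyapWeight γ c τ * (f (X τ + c • V τ) - f xstar) +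
        (1 / 2 * ‖τ ^ γ • V τ + (2 * γ * τ ^ (γ - 1)) • (X τ - xstar)‖ ^ 2 +
          γ * (1 - γ) * τ ^ (2 * (γ - 1)) * ‖X τ - xstar‖ ^ 2) := by
    funext τ
    rw [lyapCont, lyapWeight, add_assoc]
  rw [hE]
  refine ⟨_, (hW.mul ((hasDerivAt_potential hG hX hV).sub_const _)).add
    (hasDerivAt_kinetic (xstar := xstar) ht0 hX hV), ?_⟩
  have hconvex : f (X t + c • V t) - f xstar ≤ ⟪G, X t - xstar⟫ + c * ⟪G, V t⟫ := by
    have h := hf.add_inner_sub_le_of_hasGradientAt hG xstar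
    rw [show xstar - (X t + c • V t) = -((X t - xstar) + c • V t) by abel, inner_neg_right,
      inner_add_right, inner_smul_right] at h
    linarith
  have hid := lyapWeight_mul_one_sub (γ := γ) ht0.ne' ht.ne'
  have hdom := sq_rpow_div_two_le_lyapWeight_mul hκ ht
  have hq : t ^ (2 * γ) = (t ^ γ) ^ 2 := by
    rw [mul_comm, Real.rpow_mul ht0.le, Real.rpow_two]
  set F := f (X t + c • V t) - f xstar
  set β := 2 * γ * (t ^ γ) ^ 2 / t * (1 + 3 * γ * c / (2 * t))
  have hF : 0 ≤ F := sub_nonneg.2 hmin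
  have hβ : 0 ≤ β := by positivity
  have e1 : (A' - β) * F ≤ 0 := mul_nonpos_of_nonpos_of_nonneg (sub_nonpos.2 hA') hF
  have e2 : β * (F - (⟪G, X t - xstar⟫ + c * ⟪G, V t⟫)) ≤ 0 :=
    mul_nonpos_of_nonneg_of_nonpos hβ (sub_nonpos.2 hconvex)
  have e3 :
      c * ((t ^ γ) ^ 2 / 2 - lyapWeight γ c t * (1 + 3 * γ * c / (2 * t))) * ‖G‖ ^ 2 ≤ 0 :=
    mul_nonpos_of_nonpos_of_nonneg (mul_nonpos_of_nonneg_of_nonpos hc (sub_nonpos.2 hdom))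
      (sq_nonneg _)
  have e4 : 0 ≤ 2 * γ * (1 - γ) * (1 + γ) * (t ^ γ) ^ 2 / t ^ 3 * ‖X t - xstar‖ ^ 2 := by
    have : 0 ≤ 1 - γ := by linarith
    positivity
  rw [hq]
  -- `Ė + (√s/2) t^(2γ) ‖G‖²` is `(A' - β) F + β (F - ⟪G, X + √s V - x⋆⟫)
  -- + √s (t^(2γ)/2 - A (1 + 3γ√s/(2t))) ‖G‖² - e4`, after rewriting `A (1 - 3γ√s/t)` by `hid`.
  linear_combination e1 + e2 + e3 + e4 + ⟪G, V t⟫ * hid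

theorem underdamped_continuous_integral_bound_general
    (γ s : ℝ) (hγ : γ ∈ Set.Ioo (0 : ℝ) 1) :
    ∃ t₀ : ℝ, 3 * γ * Real.sqrt s < t₀ ∧
      ∀ (d : ℕ) (L : ℝ) (f : EuclideanSpace ℝ (Fin d) → ℝ)
        (f' : EuclideanSpace ℝ (Fin d) → EuclideanSpace ℝ (Fin d))
        (xstar : EuclideanSpace ℝ (Fin d))
        (X V : ℝ → EuclideanSpace ℝ (Fin d)),
        0 < L →
        ConvexOn ℝ Set.univ f →
        (∀ z, HasGradientAt f (f' z) z) →
        (∀ z w, ‖f' z - f' w‖ ≤ L * ‖z - w‖) →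
        (∀ z, f xstar ≤ f z) →
        (∀ t ∈ Set.Ioi (0 : ℝ), HasDerivAt X (V t) t) →
        (∀ t ∈ Set.Ioi (0 : ℝ), HasDerivAt V
          (-((3 * γ / t) • V t +
              (1 + 3 * γ * Real.sqrt s / (2 * t)) • f' (X t + Real.sqrt s • V t))) t) →
        ∀ t : ℝ, t₀ ≤ t →
          (Real.sqrt s / 2) *
              (∫ u in t₀..t, u ^ (2 * γ) * ‖f' (X u + Real.sqrt s • V u)‖ ^ 2) ≤
            lyapCont γ s f xstar X V t₀ := by
  have hγ' : γ ∈ Icc (0 : ℝ) 1 := Ioo_subset_Icc_self hγ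
  have hb : 0 ≤ 3 * γ * Real.sqrt s := by have := Real.sqrt_nonneg s; have := hγ'.1; positivity
  refine ⟨3 * γ * Real.sqrt s + 1, lt_add_one _, ?_⟩
  intro d L f f' xstar X V _ hf hgrad hlip hmin hX hV t ht
  set t₀ := 3 * γ * Real.sqrt s + 1
  have hlate : ∀ u ∈ Icc t₀ t, 3 * γ * Real.sqrt s < u ∧ u ∈ Ioi 0 := fun u hu =>
    ⟨by linarith [hu.1], by simp only [mem_Ioi]; linarith [hu.1]⟩
  have hf' : Continuous f' :=
    (LipschitzWith.of_dist_le' fun z w => by simpa [dist_eq_norm] using hlip z w).continuous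
  have hint : IntegrableOn
      (fun u => Real.sqrt s / 2 * (u ^ (2 * γ) * ‖f' (X u + Real.sqrt s • V u)‖ ^ 2))
      (Icc t₀ t) := by
    refine ContinuousOn.integrableOn_Icc fun u hu => ContinuousAt.continuousWithinAt ?_
    have := (hX u (hlate u hu).2).continuousAt
    have := (hV u (hlate u hu).2).continuousAt
    have := Real.continuous_rpow_const (by linarith [hγ'.1] : (0 : ℝ) ≤ 2 * γ)
    fun_prop
  have hdecay := integral_le_sub_of_forall_hasDerivAt_le ht hint fun u hu =>
    exists_hasDerivAt_lyapCont_le hγ' (hlate u hu).1 hf (hmin _) (hgrad _)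
      (hX u (hlate u hu).2) (hV u (hlate u hu).2)
  rw [intervalIntegral.integral_const_mul] at hdecay
  linarith [lyapCont_nonneg (f := f) (xstar := xstar) (X := X) (V := V) hγ'
    (hlate t ⟨ht, le_rfl⟩).1 (hmin _)]

/-- For every γ ∈ (0,1) and every step size s > 0, there exists
t₀ > 3γ√s (depending only on γ and s) such that along any solution X of the
high-resolution differential equation, for all t ≥ t₀,
(√s/2) ∫_{t₀}^{t} u^{2γ} ‖∇f(X(u) + √s Ẋ(u))‖² du ≤ E(t₀). -/
theorem underdamped_continuous_integral_bound
    (γ s : ℝ) (hγ : γ ∈ Set.Ioo (0 : ℝ) 1) (hs : 0 < s) :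
    ∃ t₀ : ℝ, 3 * γ * Real.sqrt s < t₀ ∧
      ∀ (d : ℕ) (L : ℝ) (f : EuclideanSpace ℝ (Fin d) → ℝ)
        (f' : EuclideanSpace ℝ (Fin d) → EuclideanSpace ℝ (Fin d))
        (xstar : EuclideanSpace ℝ (Fin d))
        (X V : ℝ → EuclideanSpace ℝ (Fin d)),
        0 < L →
        ConvexOn ℝ Set.univ f →
        (∀ z, HasGradientAt f (f' z) z) →
        (∀ z w, ‖f' z - f' w‖ ≤ L * ‖z - w‖) →
        (∀ z, f xstar ≤ f z) →
        (∀ t ∈ Set.Ioi (0 : ℝ), HasDerivAt X (V t) t) →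
        (∀ t ∈ Set.Ioi (0 : ℝ), HasDerivAt V
          (-((3 * γ / t) • V t +
              (1 + 3 * γ * Real.sqrt s / (2 * t)) • f' (X t + Real.sqrt s • V t))) t) →
        ∀ t : ℝ, t₀ ≤ t →
          (Real.sqrt s / 2) *
              (∫ u in t₀..t, u ^ (2 * γ) * ‖f' (X u + Real.sqrt s • V u)‖ ^ 2) ≤
            lyapCont γ s f xstar X V t₀ :=
  underdamped_continuous_integral_bound_general γ s hγ
end

section
/- For every step size s with 0 < s < 1/L, the sequence {y_k} generated by critical FISTA obeys lim_{k→∞} [ s k · min_{0 ≤ i ≤ k} ‖G_s(y_i)‖² ] = 0, and the objective value Φ(x_k) − Φ(x⋆) is bounded above by Φ(x₁) − Φ(x⋆) + (1/2)‖v₁‖² for all k ≥ 1, where v_k = (x_k − x_{k−1})/√s. -/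
/-!
The proximal-gradient inequality
`Φ(P_s z) ≤ Φ(u) + ⟪G_s z, z - u⟫ - s (1 - L s / 2) ‖G_s z‖²`, taken at `z = y_k`, `u = x_k`,
together with the critical momentum `y_k - x_k = x_k - x_{k-1}`, shows that the energy
`Φ(x_k) - Φ(x⋆) + ‖x_k - x_{k-1}‖² / (2 s)` drops by at least `(s / 2) (1 - L s) ‖G_s(y_k)‖²` at
every step. So the energy bounds `Φ(x_k) - Φ(x⋆)`, and `∑ ‖G_s(y_k)‖²` converges, which forces
`k · min_{i ≤ k} ‖G_s(y_i)‖² → 0`.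
-/

open Set Filter Topology

section FirstOrder

variable {E : Type*} [NormedAddCommGroup E] [NormedSpace ℝ E] {f g q : E → ℝ} {s : Set E}
  {x y : E} {t : ℝ}

theorem ConvexOn.apply_add_smul_sub_le (hf : ConvexOn ℝ s f) (hx : x ∈ s) (hy : y ∈ s)
    (ht₀ : 0 ≤ t) (ht₁ : t ≤ 1) : f (x + t • (y - x)) ≤ f x + t * (f y - f x) := by
  have := hf.2 hx hy (sub_nonneg.2 ht₁) ht₀ (sub_add_cancel 1 t)
  rw [show x + t • (y - x) = (1 - t) • x + t • y by module]
  simp only [smul_eq_mul] at this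
  linarith

theorem ConvexOn.add_fderiv_sub_le {f' : E →L[ℝ] ℝ} (hf : ConvexOn ℝ s f) (hx : x ∈ s)
    (hy : y ∈ s) (hf' : HasFDerivAt f f' x) : f x + f' (y - x) ≤ f y := by
  have hslope := (hf'.hasLineDerivAt (y - x)).tendsto_slope_zero_right
  have hbound : ∀ᶠ t in 𝓝[>] (0 : ℝ), t⁻¹ • (f (x + t • (y - x)) - f x) ≤ f y - f x := by
    filter_upwards [Ioc_mem_nhdsGT zero_lt_one] with t ⟨ht₀, ht₁⟩
    rw [smul_eq_mul, inv_mul_le_iff₀ ht₀]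
    linarith [hf.apply_add_smul_sub_le hx hy ht₀.le ht₁]
  linarith [le_of_tendsto hslope hbound]

theorem IsMinOn.le_add_fderiv_sub {q' : E →L[ℝ] ℝ} {p u : E} (hmin : IsMinOn (q + g) s p)
    (hq : HasFDerivAt q q' p) (hg : ConvexOn ℝ s g) (hp : p ∈ s) (hu : u ∈ s) :
    g p ≤ g u + q' (u - p) := by
  have hslope := (hq.hasLineDerivAt (u - p)).tendsto_slope_zero_right
  have hbound : ∀ᶠ t in 𝓝[>] (0 : ℝ), g p - g u ≤ t⁻¹ • (q (p + t • (u - p)) - q p) := by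
    filter_upwards [Ioc_mem_nhdsGT zero_lt_one] with t ⟨ht₀, ht₁⟩
    rw [smul_eq_mul, le_inv_mul_iff₀ ht₀]
    have hmin_t : q p + g p ≤ q (p + t • (u - p)) + g (p + t • (u - p)) :=
      hmin (hg.1.add_smul_sub_mem hp hu ⟨ht₀.le, ht₁⟩)
    linarith [hg.apply_add_smul_sub_le hp hu ht₀.le ht₁]
  linarith [ge_of_tendsto hslope hbound]

theorem le_add_fderiv_add_sq_of_lipschitz {f' : E → E →L[ℝ] ℝ} {L : ℝ}
    (hf : ∀ z, HasFDerivAt f (f' z) z) (hlip : ∀ z w, ‖f' z - f' w‖ ≤ L * ‖z - w‖) (x y : E) :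
    f y ≤ f x + f' x (y - x) + L / 2 * ‖y - x‖ ^ 2 := by
  set v := y - x
  let ψ : ℝ → ℝ := fun t => f x + t * f' x v + L * ‖v‖ ^ 2 * t ^ 2 / 2 - f (x + t • v)
  have hψ : ∀ t, HasDerivAt ψ (f' x v + L * ‖v‖ ^ 2 * t - f' (x + t • v) v) t := by
    intro t
    have hline : HasDerivAt (fun r : ℝ => x + r • v) v t := by
      simpa using ((hasDerivAt_id t).smul_const v).const_add x
    have hcomp : HasDerivAt (fun r => f (x + r • v)) (f' (x + t • v) v) t :=
      (hf _).comp_hasDerivAt t hline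
    have hquad := ((hasDerivAt_pow 2 t).const_mul (L * ‖v‖ ^ 2)).div_const 2
    refine ((((hasDerivAt_id t).mul_const (f' x v)).const_add (f x)).add hquad |>.sub
      hcomp).congr_deriv ?_
    push_cast; ring
  have hψ' : ∀ t ∈ interior (Ici (0 : ℝ)), 0 ≤ f' x v + L * ‖v‖ ^ 2 * t - f' (x + t • v) v := by
    intro t ht
    rw [interior_Ici] at ht
    have : (f' (x + t • v) - f' x) v ≤ L * ‖v‖ ^ 2 * t :=
      calc (f' (x + t • v) - f' x) v ≤ ‖f' (x + t • v) - f' x‖ * ‖v‖ :=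
            (le_abs_self _).trans ((f' (x + t • v) - f' x).le_opNorm v)
        _ ≤ L * ‖t • v‖ * ‖v‖ := by
            gcongr
            simpa using hlip (x + t • v) x
        _ = L * ‖v‖ ^ 2 * t := by
            rw [norm_smul, Real.norm_of_nonneg ht.le]; ring
    rw [sub_apply] at this
    linarith
  have hmono := monotoneOn_of_hasDerivWithinAt_nonneg (convex_Ici 0)
    (fun t _ => (hψ t).continuousAt.continuousWithinAt)
    (fun t _ => (hψ t).hasDerivWithinAt) hψ'
  have h01 : ψ 0 ≤ ψ 1 := hmono self_mem_Ici (mem_Ici.2 zero_le_one) zero_le_one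
  simp only [ψ, zero_mul, add_zero, zero_smul, one_mul, one_smul, one_pow, mul_one] at h01
  rw [show x + v = y by simp [v]] at h01
  linarith

end FirstOrder

section ProxGrad

open RealInnerProductSpace

variable {F : Type*} [NormedAddCommGroup F] [InnerProductSpace ℝ F] {f g : F → ℝ} {f' : F → F}
  {s L : ℝ}

theorem IsMinOn.le_add_inner_of_prox (hg : ConvexOn ℝ univ g) {b p : F}
    (hp : IsMinOn (fun w => 1 / (2 * s) * ‖w - b‖ ^ 2 + g w) univ p) (u : F) :
    g p ≤ g u + ⟪s⁻¹ • (p - b), u - p⟫ := by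
  have hq := (((hasFDerivAt_id p).sub_const b).norm_sq).const_mul (1 / (2 * s))
  have := hp.le_add_fderiv_sub hq hg (mem_univ p) (mem_univ u)
  simp only [smul_apply, ContinuousLinearMap.comp_apply, innerSL_apply_apply,
    ContinuousLinearMap.id_apply, id_eq, smul_eq_mul, nsmul_eq_mul, Nat.cast_ofNat] at this
  rwa [real_inner_smul_left, ← show 1 / (2 * s) * (2 * ⟪p - b, u - p⟫) = s⁻¹ * ⟪p - b, u - p⟫ by
    ring]

variable [CompleteSpace F]

theorem prox_grad_inequality (hs : 0 < s) (hf : ConvexOn ℝ univ f)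
    (hgrad : ∀ z, HasGradientAt f (f' z) z) (hlip : ∀ z w, ‖f' z - f' w‖ ≤ L * ‖z - w‖)
    (hg : ConvexOn ℝ univ g) {z p : F}
    (hp : IsMinOn (fun w => 1 / (2 * s) * ‖w - (z - s • f' z)‖ ^ 2 + g w) univ p) (u : F) :
    f p + g p ≤ f u + g u + ⟪s⁻¹ • (z - p), z - u⟫ -
      s * (1 - L * s / 2) * ‖s⁻¹ • (z - p)‖ ^ 2 := by
  have hfderiv : ∀ w, HasFDerivAt f (InnerProductSpace.toDual ℝ F (f' w)) w :=
    fun w => (hgrad w).hasFDerivAt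
  have hconv := hf.add_fderiv_sub_le (mem_univ z) (mem_univ u) (hfderiv z)
  have hdesc := le_add_fderiv_add_sq_of_lipschitz hfderiv
    (fun z w => by rw [← map_sub, LinearIsometryEquiv.norm_map]; exact hlip z w) z p
  have hprox := hp.le_add_inner_of_prox hg u
  simp only [InnerProductSpace.toDual_apply_apply] at hconv hdesc
  set G := s⁻¹ • (z - p)
  have hzp : z - p = s • G := (smul_inv_smul₀ hs.ne' _).symm
  have hGG : ⟪G, z - p⟫ = s * ‖G‖ ^ 2 := by
    rw [hzp, real_inner_smul_right, real_inner_self_eq_norm_sq]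
  have hpz : ‖p - z‖ ^ 2 = s ^ 2 * ‖G‖ ^ 2 := by
    rw [← norm_neg, neg_sub, hzp, norm_smul, mul_pow, Real.norm_of_nonneg hs.le]
  have hsub : s⁻¹ • (p - (z - s • f' z)) = f' z - G := by
    rw [show p - (z - s • f' z) = s • f' z - (z - p) by abel, smul_sub, inv_smul_smul₀ hs.ne']
  rw [hsub] at hprox
  rw [hpz] at hdesc
  simp only [inner_sub_left, inner_sub_right] at hprox hdesc hconv hGG ⊢
  linarith

theorem critical_fista_energy_step (hs : 0 < s) (hf : ConvexOn ℝ univ f)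
    (hgrad : ∀ z, HasGradientAt f (f' z) z) (hlip : ∀ z w, ‖f' z - f' w‖ ≤ L * ‖z - w‖)
    (hg : ConvexOn ℝ univ g) {x₀ x₁ y p : F} (hy : y = (2 : ℝ) • x₁ - x₀)
    (hp : IsMinOn (fun w => 1 / (2 * s) * ‖w - (y - s • f' y)‖ ^ 2 + g w) univ p) :
    f p + g p + 1 / (2 * s) * ‖p - x₁‖ ^ 2 + s / 2 * (1 - L * s) * ‖s⁻¹ • (y - p)‖ ^ 2 ≤
      f x₁ + g x₁ + 1 / (2 * s) * ‖x₁ - x₀‖ ^ 2 := by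
  have hkey := prox_grad_inequality hs hf hgrad hlip hg hp x₁
  set G := s⁻¹ • (y - p)
  have hmomentum : y - x₁ = x₁ - x₀ := by rw [hy]; module
  have hpx : p - x₁ = (x₁ - x₀) - s • G := by
    rw [smul_inv_smul₀ hs.ne', ← hmomentum]; abel
  have hnorm : 1 / (2 * s) * ‖p - x₁‖ ^ 2 =
      1 / (2 * s) * ‖x₁ - x₀‖ ^ 2 - ⟪x₁ - x₀, G⟫ + s / 2 * ‖G‖ ^ 2 := by
    rw [hpx, norm_sub_sq_real, real_inner_smul_right, norm_smul, Real.norm_of_nonneg hs.le]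
    field_simp
  rw [hmomentum, real_inner_comm] at hkey
  linarith

end ProxGrad

theorem summable_of_forall_add_mul_le {E a : ℕ → ℝ} {c : ℝ} (hc : 0 < c) (hE : ∀ k, 0 ≤ E k)
    (ha : ∀ k, 0 ≤ a k) (h : ∀ k, E (k + 1) + c * a k ≤ E k) : Summable a := by
  refine summable_of_sum_range_le ha (c := E 0 / c) fun n => ?_
  have htelescope : c * ∑ i ∈ Finset.range n, a i ≤ E 0 - E n := by
    induction n with
    | zero => simp
    | succ n ih => rw [Finset.sum_range_succ, mul_add]; linarith [h n]
  rw [le_div_iff₀ hc]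
  linarith [hE n]

theorem tendsto_mul_sInf_image_Iic_of_summable {a : ℕ → ℝ} (ha : ∀ i, 0 ≤ a i)
    (hsum : Summable a) : Tendsto (fun k : ℕ => (k : ℝ) * sInf (a '' Iic k)) atTop (𝓝 0) := by
  -- `k · min_{i ≤ k} a i ≤ 2 ∑_{k/2 ≤ i < k} a i`, a difference of partial sums that tends to `0`.
  set S := fun n => ∑ i ∈ Finset.range n, a i
  have hS : Tendsto S atTop (𝓝 (∑' i, a i)) := hsum.tendsto_sum_tsum_nat
  have hhalf : Tendsto (fun k => 2 * (S k - S (k / 2))) atTop (𝓝 0) := by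
    simpa using ((hS.sub (hS.comp (Nat.tendsto_div_const_atTop two_ne_zero))).const_mul 2)
  have hnonneg : ∀ k, 0 ≤ sInf (a '' Iic k) := fun k =>
    Real.sInf_nonneg (by rintro _ ⟨i, -, rfl⟩; exact ha i)
  refine tendsto_of_tendsto_of_tendsto_of_le_of_le tendsto_const_nhds hhalf
    (fun k => mul_nonneg k.cast_nonneg (hnonneg k)) (fun k => ?_)
  have hmin : ∀ i ∈ Finset.Ico (k / 2) k, sInf (a '' Iic k) ≤ a i := fun i hi =>
    csInf_le ((finite_Iic k).image a).bddBelow ⟨i, mem_Iic.2 (Finset.mem_Ico.1 hi).2.le, rfl⟩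
  have hsum_Ico := Finset.card_nsmul_le_sum _ _ _ hmin
  rw [Nat.card_Ico, nsmul_eq_mul, Finset.sum_Ico_eq_sub _ (Nat.div_le_self k 2)] at hsum_Ico
  have hcard : (k : ℝ) ≤ 2 * ((k - k / 2 : ℕ) : ℝ) := by
    exact_mod_cast (by omega : k ≤ 2 * (k - k / 2))
  calc (k : ℝ) * sInf (a '' Iic k) ≤ 2 * ((k - k / 2 : ℕ) : ℝ) * sInf (a '' Iic k) := by
        gcongr; exact hnonneg k
    _ ≤ 2 * (S k - S (k / 2)) := by rw [mul_assoc]; gcongr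

theorem critical_FISTA_convergence_general
    (s L : ℝ) (hL : 0 < L) (hs : 0 < s) (hsL : s < 1 / L)
    {d : ℕ} (f g : EuclideanSpace ℝ (Fin d) → ℝ)
    (f' : EuclideanSpace ℝ (Fin d) → EuclideanSpace ℝ (Fin d))
    (xstar : EuclideanSpace ℝ (Fin d))
    (P : EuclideanSpace ℝ (Fin d) → EuclideanSpace ℝ (Fin d))
    (x y : ℕ → EuclideanSpace ℝ (Fin d))
    (hfconv : ConvexOn ℝ Set.univ f)
    (hgrad : ∀ z, HasGradientAt f (f' z) z)
    (hlip : ∀ z w, ‖f' z - f' w‖ ≤ L * ‖z - w‖)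
    (hgconv : ConvexOn ℝ Set.univ g)
    (hmin : ∀ z, f xstar + g xstar ≤ f z + g z)
    (hP : ∀ z, IsMinOn
      (fun w => (1 / (2 * s)) * ‖w - (z - s • f' z)‖ ^ 2 + g w) Set.univ (P z))
    (hx : ∀ k : ℕ, 1 ≤ k →
      x k = y (k - 1) - s • (s⁻¹ • (y (k - 1) - P (y (k - 1)))))
    (hy : ∀ k : ℕ, 1 ≤ k → y k = (2 : ℝ) • x k - x (k - 1)) :
    Filter.Tendsto
      (fun k : ℕ => s * (k : ℝ) *
        sInf ((fun i : ℕ => ‖s⁻¹ • (y i - P (y i))‖ ^ 2) '' Set.Iic k))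
      Filter.atTop (nhds 0) ∧
    (∀ k : ℕ, 1 ≤ k →
      (f (x k) + g (x k)) - (f xstar + g xstar) ≤
        (f (x 1) + g (x 1)) - (f xstar + g xstar) +
          (1 / 2) * ‖(Real.sqrt s)⁻¹ • (x 1 - x 0)‖ ^ 2) := by
  have hc : 0 < s / 2 * (1 - L * s) :=
    mul_pos (half_pos hs) (sub_pos.2 (by rwa [lt_div_iff₀ hL, mul_comm] at hsL))
  have hxP : ∀ k, x (k + 1) = P (y k) := fun k => by
    rw [hx (k + 1) k.succ_pos, Nat.add_sub_cancel, smul_inv_smul₀ hs.ne', sub_sub_cancel]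
  have hy' : ∀ k, y (k + 1) = (2 : ℝ) • x (k + 1) - x k := fun k => by
    rw [hy (k + 1) k.succ_pos, Nat.add_sub_cancel]
  let E : ℕ → ℝ := fun k => f (x (k + 1)) + g (x (k + 1)) - (f xstar + g xstar) +
    1 / (2 * s) * ‖x (k + 1) - x k‖ ^ 2
  have hE : ∀ k, 0 ≤ E k := fun k => add_nonneg (sub_nonneg.2 (hmin _)) (by positivity)
  have hstep : ∀ k, E (k + 1) + s / 2 * (1 - L * s) * ‖s⁻¹ • (y (k + 1) - P (y (k + 1)))‖ ^ 2 ≤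
      E k := fun k => by
    have := critical_fista_energy_step hs hfconv hgrad hlip hgconv (hy' k) (hP (y (k + 1)))
    simp only [E]
    rw [hxP (k + 1)]
    linarith
  constructor
  · have hsum : Summable fun i => ‖s⁻¹ • (y i - P (y i))‖ ^ 2 :=
      (summable_nat_add_iff 1).1
        (summable_of_forall_add_mul_le hc hE (fun k => by positivity) hstep)
    simpa [mul_assoc] using
      (tendsto_mul_sInf_image_Iic_of_summable (fun i => by positivity) hsum).const_mul s
  · intro k hk
    obtain ⟨j, rfl⟩ := Nat.exists_eq_add_of_le' hk
    have hanti : E j ≤ E 0 :=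
      antitone_nat_of_succ_le (fun k => le_of_add_le_of_nonneg_left (hstep k) (by positivity))
        j.zero_le
    have hv : 1 / 2 * ‖(√s)⁻¹ • (x 1 - x 0)‖ ^ 2 = 1 / (2 * s) * ‖x 1 - x 0‖ ^ 2 := by
      rw [norm_smul, norm_inv, Real.norm_of_nonneg (Real.sqrt_nonneg _), mul_pow, inv_pow,
        Real.sq_sqrt hs.le]
      ring
    simp only [E] at hanti
    rw [hv]
    linarith [show 0 ≤ 1 / (2 * s) * ‖x (j + 1) - x j‖ ^ 2 by positivity]

/-- For every step size s with 0 < s < 1/L, the sequence {y_k}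
generated by critical FISTA obeys
lim_{k→∞} [ s k · min_{0 ≤ i ≤ k} ‖G_s(y_i)‖² ] = 0, and the objective value
Φ(x_k) − Φ(x⋆) is bounded above by Φ(x₁) − Φ(x⋆) + (1/2)‖v₁‖² for all k ≥ 1,
where v_k = (x_k − x_{k−1})/√s. -/
theorem critical_FISTA_convergence
    (s L : ℝ) (hL : 0 < L) (hs : 0 < s) (hsL : s < 1 / L)
    {d : ℕ} (f g : EuclideanSpace ℝ (Fin d) → ℝ)
    (f' : EuclideanSpace ℝ (Fin d) → EuclideanSpace ℝ (Fin d))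
    (xstar : EuclideanSpace ℝ (Fin d))
    (P : EuclideanSpace ℝ (Fin d) → EuclideanSpace ℝ (Fin d))
    (x y : ℕ → EuclideanSpace ℝ (Fin d))
    (hfconv : ConvexOn ℝ Set.univ f)
    (hgrad : ∀ z, HasGradientAt f (f' z) z)
    (hlip : ∀ z w, ‖f' z - f' w‖ ≤ L * ‖z - w‖)
    (hgconv : ConvexOn ℝ Set.univ g)
    (hgcont : Continuous g)
    (hmin : ∀ z, f xstar + g xstar ≤ f z + g z)
    (hP : ∀ z, IsMinOn
      (fun w => (1 / (2 * s)) * ‖w - (z - s • f' z)‖ ^ 2 + g w) Set.univ (P z))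
    (hy0 : y 0 = x 0)
    (hx : ∀ k : ℕ, 1 ≤ k →
      x k = y (k - 1) - s • (s⁻¹ • (y (k - 1) - P (y (k - 1)))))
    (hy : ∀ k : ℕ, 1 ≤ k → y k = (2 : ℝ) • x k - x (k - 1)) :
    Filter.Tendsto
      (fun k : ℕ => s * (k : ℝ) *
        sInf ((fun i : ℕ => ‖s⁻¹ • (y i - P (y i))‖ ^ 2) '' Set.Iic k))
      Filter.atTop (nhds 0) ∧
    (∀ k : ℕ, 1 ≤ k →
      (f (x k) + g (x k)) - (f xstar + g xstar) ≤
        (f (x 1) + g (x 1)) - (f xstar + g xstar) +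
          (1 / 2) * ‖(Real.sqrt s)⁻¹ • (x 1 - x 0)‖ ^ 2) :=
  critical_FISTA_convergence_general s L hL hs hsL f g f' xstar P x y hfconv hgrad hlip hgconv hmin
    hP hx hy
end

section
/- For every step size s with 0 < s < 1/L, along the iterates of critical FISTA the Lyapunov function E(k) = Φ(x_k) − Φ(x⋆) + (1/2)‖v_k‖², where v_k = (x_k − x_{k−1})/√s, satisfies E(k+1) − E(k) ≤ − (s(1 − sL)/2) ‖G_s(y_k)‖² for all k ≥ 1. -/
/-!
One proximal-gradient step `p = P_s(y)` satisfies the three-point inequality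
`Φ(p) ≤ Φ(z) + s⁻¹⟪y - p, p - z⟫ + (L/2)‖y - p‖²` for every `z`: add the gradient inequality of
the convex `f` at `y`, the descent lemma for `f` from `y` to `p`, and the first-order optimality
condition of the prox for the convex `g`. For critical FISTA take `y = y_k`, `p = x_{k+1}`,
`z = x_k`. The momentum rule gives `x_k - x_{k-1} = y_k - x_k`, and expanding
`‖y_k - x_k‖² = ‖y_k - x_{k+1}‖² + 2⟪y_k - x_{k+1}, x_{k+1} - x_k⟫ + ‖x_{k+1} - x_k‖²` makes the
change of kinetic energy cancel the inner product, leaving `(L/2 - 1/(2s))‖y_k - x_{k+1}‖²`.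
-/

open Set Filter Topology
open scoped RealInnerProductSpace

theorem nonneg_of_forall_add_mul_nonneg {a b : ℝ} (h : ∀ t ∈ Ioc (0 : ℝ) 1, 0 ≤ a + t * b) :
    0 ≤ a := by
  have hlim : Tendsto (fun t : ℝ => a + t * b) (𝓝[>] 0) (𝓝 a) :=
    ((by fun_prop : Continuous fun t : ℝ => a + t * b).tendsto' 0 a (by simp)).mono_left
      nhdsWithin_le_nhds
  exact ge_of_tendsto hlim (eventually_of_mem (Ioc_mem_nhdsGT one_pos) h)

section InnerProductSpace

variable {E : Type*} [NormedAddCommGroup E] [InnerProductSpace ℝ E]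

theorem norm_inv_sqrt_smul_sq {s : ℝ} (hs : 0 ≤ s) (v : E) :
    ‖(Real.sqrt s)⁻¹ • v‖ ^ 2 = s⁻¹ * ‖v‖ ^ 2 := by
  rw [norm_smul, mul_pow, norm_inv, Real.norm_of_nonneg (Real.sqrt_nonneg s), inv_pow,
    Real.sq_sqrt hs]

theorem add_inner_le_of_isMinOn_prox {g : E → ℝ} (hg : ConvexOn ℝ univ g) {s : ℝ} (hs : 0 < s)
    {u p : E} (hp : IsMinOn (fun w => 1 / (2 * s) * ‖w - u‖ ^ 2 + g w) univ p) (w : E) :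
    g p + s⁻¹ * ⟪u - p, w - p⟫ ≤ g w := by
  suffices 0 ≤ s⁻¹ * ⟪p - u, w - p⟫ + (g w - g p) by
    rw [← neg_sub p u, inner_neg_left]
    linarith
  -- compare `p` with the points `(1 - t) • p + t • w` and let `t → 0`
  refine nonneg_of_forall_add_mul_nonneg (b := (2 * s)⁻¹ * ‖w - p‖ ^ 2) fun t ⟨ht0, ht1⟩ => ?_
  have hmin := isMinOn_iff.mp hp ((1 - t) • p + t • w) (mem_univ _)
  have hconv := hg.2 (mem_univ p) (mem_univ w) (sub_nonneg.2 ht1) ht0.le (sub_add_cancel 1 t)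
  have hsq : ‖(1 - t) • p + t • w - u‖ ^ 2
      = ‖p - u‖ ^ 2 + 2 * t * ⟪p - u, w - p⟫ + t ^ 2 * ‖w - p‖ ^ 2 := by
    rw [show (1 - t) • p + t • w - u = (p - u) + t • (w - p) by module, norm_add_sq_real,
      real_inner_smul_right, norm_smul, mul_pow, Real.norm_of_nonneg ht0.le]
    ring
  rw [hsq] at hmin
  simp only [smul_eq_mul] at hconv
  refine (mul_nonneg_iff_of_pos_left ht0).mp ?_
  have hexpand : t * (s⁻¹ * ⟪p - u, w - p⟫ + (g w - g p) + t * ((2 * s)⁻¹ * ‖w - p‖ ^ 2)) =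
      1 / (2 * s) * (2 * t * ⟪p - u, w - p⟫ + t ^ 2 * ‖w - p‖ ^ 2) + t * (g w - g p) := by
    field_simp
    ring
  rw [hexpand]
  nlinarith

variable [CompleteSpace E]

theorem HasGradientAt.hasDerivAt_add_smul {f : E → ℝ} {x v g' : E} {t : ℝ}
    (h : HasGradientAt f g' (x + t • v)) :
    HasDerivAt (fun t : ℝ => f (x + t • v)) ⟪g', v⟫ t := by
  have hline : HasDerivAt (fun t : ℝ => x + t • v) v t := by
    simpa using ((hasDerivAt_id t).smul_const v).const_add x
  exact h.hasFDerivAt.comp_hasDerivAt t hline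

theorem ConvexOn.add_inner_gradient_le {f : E → ℝ} {x g' : E} (hf : ConvexOn ℝ univ f)
    (h : HasGradientAt f g' x) (y : E) : f x + ⟪g', y - x⟫ ≤ f y := by
  have hline : ConvexOn ℝ univ (fun t : ℝ => f (x + t • (y - x))) := by
    simpa [Function.comp_def, AffineMap.lineMap_apply, add_comm]
      using hf.comp_affineMap (AffineMap.lineMap x y : ℝ →ᵃ[ℝ] E)
  have hderiv : HasDerivAt (fun t : ℝ => f (x + t • (y - x))) ⟪g', y - x⟫ 0 :=
    HasGradientAt.hasDerivAt_add_smul (by simpa using h)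
  have hslope := hline.le_slope_of_hasDerivAt (mem_univ 0) (mem_univ 1) zero_lt_one hderiv
  simp only [slope_def_field, one_smul, zero_smul, add_zero, add_sub_cancel, sub_zero,
    div_one] at hslope
  linarith

theorem le_add_inner_add_sq_of_lipschitz_gradient {f : E → ℝ} {f' : E → E} {L : ℝ}
    (hgrad : ∀ z, HasGradientAt f (f' z) z) (hlip : ∀ z w, ‖f' z - f' w‖ ≤ L * ‖z - w‖)
    (x y : E) : f y ≤ f x + ⟪f' x, y - x⟫ + L / 2 * ‖y - x‖ ^ 2 := by
  set v := y - x
  set φ : ℝ → ℝ := fun t => f (x + t • v) - f x - t * ⟪f' x, v⟫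
  set B : ℝ → ℝ := fun t => L / 2 * t ^ 2 * ‖v‖ ^ 2
  have hφ (t : ℝ) : HasDerivAt φ (⟪f' (x + t • v), v⟫ - ⟪f' x, v⟫) t :=
    ((hgrad _).hasDerivAt_add_smul.sub_const (f x)).sub (hasDerivAt_mul_const ⟪f' x, v⟫)
  have hB (t : ℝ) : HasDerivAt B (L * t * ‖v‖ ^ 2) t := by
    have := ((hasDerivAt_pow 2 t).const_mul (L / 2)).mul_const (‖v‖ ^ 2)
    exact this.congr_deriv (by simp only [Nat.cast_ofNat, pow_one, Nat.add_one_sub_one]; ring)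
  have hslope (t : ℝ) (ht : 0 ≤ t) : ⟪f' (x + t • v), v⟫ - ⟪f' x, v⟫ ≤ L * t * ‖v‖ ^ 2 :=
    calc ⟪f' (x + t • v), v⟫ - ⟪f' x, v⟫ = ⟪f' (x + t • v) - f' x, v⟫ := (inner_sub_left ..).symm
      _ ≤ ‖f' (x + t • v) - f' x‖ * ‖v‖ := real_inner_le_norm _ _
      _ ≤ L * ‖t • v‖ * ‖v‖ := by
        gcongr
        simpa using hlip (x + t • v) x
      _ = L * t * ‖v‖ ^ 2 := by rw [norm_smul, Real.norm_of_nonneg ht]; ring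
  have hφB := image_le_of_deriv_right_le_deriv_boundary (a := 0) (b := 1)
    (fun t _ => (hφ t).continuousAt.continuousWithinAt) (fun t _ => (hφ t).hasDerivWithinAt)
    (by simp [φ, B]) (fun t _ => (hB t).continuousAt.continuousWithinAt)
    (fun t _ => (hB t).hasDerivWithinAt) (fun t ht => hslope t ht.1) (right_mem_Icc.2 zero_le_one)
  simp only [φ, B, one_smul, one_mul, one_pow, mul_one] at hφB
  rw [add_sub_cancel] at hφB
  linarith

theorem proxGrad_three_point_le {f g : E → ℝ} {f' : E → E} {L s : ℝ} (hf : ConvexOn ℝ univ f)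
    (hgrad : ∀ z, HasGradientAt f (f' z) z) (hlip : ∀ z w, ‖f' z - f' w‖ ≤ L * ‖z - w‖)
    (hg : ConvexOn ℝ univ g) (hs : 0 < s) {y p : E}
    (hp : IsMinOn (fun w => 1 / (2 * s) * ‖w - (y - s • f' y)‖ ^ 2 + g w) univ p) (z : E) :
    f p + g p ≤ f z + g z + s⁻¹ * ⟪y - p, p - z⟫ + L / 2 * ‖y - p‖ ^ 2 := by
  have hfz := hf.add_inner_gradient_le (hgrad y) z
  have hfp := le_add_inner_add_sq_of_lipschitz_gradient hgrad hlip y p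
  have hgp := add_inner_le_of_isMinOn_prox hg hs hp z
  have hsplit : s⁻¹ * ⟪y - s • f' y - p, z - p⟫ = -(s⁻¹ * ⟪y - p, p - z⟫) - ⟪f' y, z - p⟫ := by
    rw [sub_right_comm, inner_sub_left, real_inner_smul_left, ← neg_sub p z, inner_neg_right,
      mul_sub, ← mul_assoc, inv_mul_cancel₀ hs.ne', one_mul, mul_neg]
  have hinner : ⟪f' y, p - y⟫ + ⟪f' y, z - p⟫ = ⟪f' y, z - y⟫ := by
    rw [← inner_add_right, sub_add_sub_cancel']
  rw [norm_sub_rev] at hfp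
  linarith

end InnerProductSpace

theorem critical_FISTA_lyapunov_decay_general
    (s L : ℝ) (hs : 0 < s)
    {d : ℕ} (f g : EuclideanSpace ℝ (Fin d) → ℝ)
    (f' : EuclideanSpace ℝ (Fin d) → EuclideanSpace ℝ (Fin d))
    (xstar : EuclideanSpace ℝ (Fin d))
    (P : EuclideanSpace ℝ (Fin d) → EuclideanSpace ℝ (Fin d))
    (x y : ℕ → EuclideanSpace ℝ (Fin d))
    (hfconv : ConvexOn ℝ Set.univ f)
    (hgrad : ∀ z, HasGradientAt f (f' z) z)
    (hlip : ∀ z w, ‖f' z - f' w‖ ≤ L * ‖z - w‖)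
    (hgconv : ConvexOn ℝ Set.univ g)
    (hP : ∀ z, IsMinOn
      (fun w => (1 / (2 * s)) * ‖w - (z - s • f' z)‖ ^ 2 + g w) Set.univ (P z))
    (hx : ∀ k : ℕ, 1 ≤ k →
      x k = y (k - 1) - s • (s⁻¹ • (y (k - 1) - P (y (k - 1)))))
    (hy : ∀ k : ℕ, 1 ≤ k → y k = (2 : ℝ) • x k - x (k - 1)) :
    ∀ k : ℕ, 1 ≤ k →
      ((f (x (k + 1)) + g (x (k + 1))) - (f xstar + g xstar) +
            (1 / 2) * ‖(Real.sqrt s)⁻¹ • (x (k + 1) - x k)‖ ^ 2) -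
          ((f (x k) + g (x k)) - (f xstar + g xstar) +
            (1 / 2) * ‖(Real.sqrt s)⁻¹ • (x k - x (k - 1))‖ ^ 2) ≤
        -(s * (1 - s * L) / 2) * ‖s⁻¹ • (y k - P (y k))‖ ^ 2 := by
  intro k hk
  have hstep : x (k + 1) = P (y k) := by
    rw [hx (k + 1) (Nat.le_add_left 1 k), Nat.add_sub_cancel, smul_inv_smul₀ hs.ne',
      sub_sub_cancel]
  have hvel : x k - x (k - 1) = y k - x k := by
    rw [hy k hk]
    module
  have hpol : ‖y k - x k‖ ^ 2 = ‖y k - P (y k)‖ ^ 2 + 2 * ⟪y k - P (y k), P (y k) - x k⟫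
      + ‖P (y k) - x k‖ ^ 2 := by
    rw [← norm_add_sq_real, sub_add_sub_cancel]
  have hdecrease := proxGrad_three_point_le hfconv hgrad hlip hgconv hs (hP (y k)) (x k)
  rw [hstep, hvel, norm_inv_sqrt_smul_sq hs.le, norm_inv_sqrt_smul_sq hs.le, norm_smul, mul_pow,
    norm_inv, Real.norm_of_nonneg hs.le, hpol]
  have hrate : -(s * (1 - s * L) / 2) * (s⁻¹ ^ 2 * ‖y k - P (y k)‖ ^ 2)
      = L / 2 * ‖y k - P (y k)‖ ^ 2 - 1 / 2 * (s⁻¹ * ‖y k - P (y k)‖ ^ 2) := by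
    field_simp
    ring
  rw [hrate]
  linear_combination hdecrease

/-- For every step size s with 0 < s < 1/L, along the iterates of
critical FISTA the Lyapunov function E(k) = Φ(x_k) − Φ(x⋆) + (1/2)‖v_k‖²,
where v_k = (x_k − x_{k−1})/√s, satisfies
E(k+1) − E(k) ≤ − (s(1 − sL)/2) ‖G_s(y_k)‖² for all k ≥ 1. -/
theorem critical_FISTA_lyapunov_decay
    (s L : ℝ) (hL : 0 < L) (hs : 0 < s) (hsL : s < 1 / L)
    {d : ℕ} (f g : EuclideanSpace ℝ (Fin d) → ℝ)
    (f' : EuclideanSpace ℝ (Fin d) → EuclideanSpace ℝ (Fin d))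
    (xstar : EuclideanSpace ℝ (Fin d))
    (P : EuclideanSpace ℝ (Fin d) → EuclideanSpace ℝ (Fin d))
    (x y : ℕ → EuclideanSpace ℝ (Fin d))
    (hfconv : ConvexOn ℝ Set.univ f)
    (hgrad : ∀ z, HasGradientAt f (f' z) z)
    (hlip : ∀ z w, ‖f' z - f' w‖ ≤ L * ‖z - w‖)
    (hgconv : ConvexOn ℝ Set.univ g)
    (hgcont : Continuous g)
    (hmin : ∀ z, f xstar + g xstar ≤ f z + g z)
    (hP : ∀ z, IsMinOn
      (fun w => (1 / (2 * s)) * ‖w - (z - s • f' z)‖ ^ 2 + g w) Set.univ (P z))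
    (hy0 : y 0 = x 0)
    (hx : ∀ k : ℕ, 1 ≤ k →
      x k = y (k - 1) - s • (s⁻¹ • (y (k - 1) - P (y (k - 1)))))
    (hy : ∀ k : ℕ, 1 ≤ k → y k = (2 : ℝ) • x k - x (k - 1)) :
    ∀ k : ℕ, 1 ≤ k →
      ((f (x (k + 1)) + g (x (k + 1))) - (f xstar + g xstar) +
            (1 / 2) * ‖(Real.sqrt s)⁻¹ • (x (k + 1) - x k)‖ ^ 2) -
          ((f (x k) + g (x k)) - (f xstar + g xstar) +
            (1 / 2) * ‖(Real.sqrt s)⁻¹ • (x k - x (k - 1))‖ ^ 2) ≤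
        -(s * (1 - s * L) / 2) * ‖s⁻¹ • (y k - P (y k))‖ ^ 2 :=
  critical_FISTA_lyapunov_decay_general s L hs f g f' xstar P x y hfconv hgrad hlip hgconv hP hx hy
end
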